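/- Small-d limit for vanishing transverse-traceless data (Lemma 3.20): Suppose η = μ = 0 and |t| ≠ 1, and set Ψ = [(1 + γ²)/(1 + t²)]^{1/(2q)}. Then for every ε > 0 there exists δ > 0 such that for every d with 0 < d < δ and every solution ψ of the model Lichnerowicz equation L_d, one has |ψ(x) − Ψ| < ε for all x ∈ ℝ. -/

import Mathlib

/-!
For `η = μ = 0` the equation reads `ψ'' = d^(q-2)/(2q) · (a_λ ψ^(q-1) - b_λ ψ^(-q-1))` with
`a_± = (t ± 1)²`, `b_± = (γ ± 1)²`. The maximum principle traps every solution in an interval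
`[m, M]` that does not depend on `d`, so `|ψ''| = O(d^(q-2))`; since `ψ'` vanishes somewhere and
`ψ` is periodic, the oscillation of `ψ` is `O(d^(q-2))` too. As `ψ'` is periodic, the mean value
theorem on `(0, π)` and `(π, 2π)` gives `ξ₁, ξ₂` at which the `λ = 1` and `λ = -1` nonlinearities,
evaluated at `ψ ξ₁` and `ψ ξ₂`, cancel. Because `ψ ξ₁ ≈ ψ ξ₂`, the strictly increasing function
`(1 + t²) s^(q-1) - (1 + γ²) s^(-q-1)`, whose zero is `Ψ`, is small at `ψ ξ₁`; hence `ψ ξ₁ ≈ Ψ`,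
and then `ψ ≈ Ψ` everywhere.
-/

open Real Filter

/-- The 2π-periodic function equal to −1 on (−π,0) and 1 on (0,π). -/
noncomputable def lam (x : ℝ) : ℝ := if 0 < Real.sin x then 1 else -1

/-- The critical exponent q = 2n/(n−2). -/
noncomputable def qex (n : ℕ) : ℝ := 2 * n / ((n : ℝ) - 2)

/-- The coupling constant κ = (n−1)/n. -/
noncomputable def kap (n : ℕ) : ℝ := ((n : ℝ) - 1) / n

/-- A solution of the model Lichnerowicz equation `L_d` with parameters t, γ, η, μ:
a 2π-periodic, positive, C¹ function, twice differentiable off the multiples of π,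
satisfying the equation there. -/
def IsModelSolution (n : ℕ) (t γ η μ d : ℝ) (ψ : ℝ → ℝ) : Prop :=
  (∀ x, ψ (x + 2 * Real.pi) = ψ x) ∧
  (∀ x, 0 < ψ x) ∧
  ContDiff ℝ 1 ψ ∧
  ∀ x : ℝ, (∀ k : ℤ, x ≠ (k : ℝ) * Real.pi) →
    DifferentiableAt ℝ (deriv ψ) x ∧
    -2 * kap n * qex n * d ^ (-(qex n - 2)) * deriv (deriv ψ) x
      - 2 * η ^ 2 * d ^ (-(2 * qex n)) * ψ x ^ (-qex n - 1)
      - kap n * (μ * d ^ (-qex n) + γ + lam x) ^ 2 * ψ x ^ (-qex n - 1)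
      + kap n * (t + lam x) ^ 2 * ψ x ^ (qex n - 1) = 0

open Set Function Topology

lemma lam_eq_one_or_eq_neg_one (x : ℝ) : lam x = 1 ∨ lam x = -1 := by
  unfold lam; split_ifs <;> simp

lemma lam_of_mem_Ioo_zero_pi {x : ℝ} (hx : x ∈ Ioo 0 π) : lam x = 1 :=
  if_pos (sin_pos_of_pos_of_lt_pi hx.1 hx.2)

lemma lam_of_mem_Ioo_pi_two_pi {x : ℝ} (hx : x ∈ Ioo π (2 * π)) : lam x = -1 := by
  refine if_neg (not_lt.2 ?_)
  have := sin_pos_of_pos_of_lt_pi (x := x - π) (by linarith [hx.1]) (by linarith [hx.2])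
  rw [sin_sub_pi] at this
  linarith

lemma ne_int_mul_pi_of_mem_Ioo {m : ℤ} {x : ℝ} (hx : x ∈ Ioo (m * π) ((m + 1) * π)) (k : ℤ) :
    x ≠ k * π := by
  rintro rfl
  have h₁ : (m : ℝ) < k := lt_of_mul_lt_mul_right hx.1 pi_pos.le
  have h₂ : (k : ℝ) < m + 1 := lt_of_mul_lt_mul_right hx.2 pi_pos.le
  norm_cast at h₁ h₂
  omega

lemma exists_pos_forall_mem_Ioo_ne_int_mul_pi (x₀ : ℝ) :
    ∃ r > 0, ∀ x ∈ Ioo x₀ (x₀ + r), ∀ k : ℤ, x ≠ k * π := by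
  have h₁ : ⌊x₀ / π⌋ * π ≤ x₀ := (le_div_iff₀ pi_pos).1 (Int.floor_le _)
  have h₂ : x₀ < (⌊x₀ / π⌋ + 1) * π := (div_lt_iff₀ pi_pos).1 (Int.lt_floor_add_one _)
  exact ⟨(⌊x₀ / π⌋ + 1) * π - x₀, by linarith, fun x hx =>
    ne_int_mul_pi_of_mem_Ioo ⟨by linarith [hx.1], by linarith [hx.2]⟩⟩

lemma forall_mem_Ioo_zero_pi_ne_int_mul_pi : ∀ x ∈ Ioo 0 π, ∀ k : ℤ, x ≠ k * π :=
  fun _ hx => ne_int_mul_pi_of_mem_Ioo (m := 0) (by simpa using hx)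

lemma forall_mem_Ioo_pi_two_pi_ne_int_mul_pi : ∀ x ∈ Ioo π (2 * π), ∀ k : ℤ, x ≠ k * π :=
  fun _ hx => ne_int_mul_pi_of_mem_Ioo (m := 1) (by norm_num; exact hx)

lemma two_lt_qex {n : ℕ} (hn : 3 ≤ n) : 2 < qex n := by
  have : (3 : ℝ) ≤ n := by exact_mod_cast hn
  rw [qex, lt_div_iff₀ (by linarith)]
  linarith

lemma kap_pos {n : ℕ} (hn : 2 ≤ n) : 0 < kap n := by
  have : (2 : ℝ) ≤ n := by exact_mod_cast hn
  unfold kap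
  apply div_pos <;> linarith

lemma rpow_qex_sub_two_div_pos {n : ℕ} (hn : 3 ≤ n) {d : ℝ} (hd : 0 < d) :
    0 < d ^ (qex n - 2) / (2 * qex n) :=
  div_pos (rpow_pos_of_pos hd _) (by linarith [two_lt_qex hn])

/-- With `a = (t + λ)²` and `b = (γ + λ)²` this is `2q d^(2-q) ψ''` in `L_d` for `η = μ = 0`. -/
noncomputable def lichnerowiczTerm (q a b s : ℝ) : ℝ := a * s ^ (q - 1) - b * s ^ (-q - 1)

noncomputable def lichnerowiczZero (q a b : ℝ) : ℝ := (b / a) ^ (1 / (2 * q))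

section LichnerowiczTerm

variable {q a b s : ℝ}

lemma lichnerowiczTerm_eq_rpow_mul (hs : 0 < s) :
    lichnerowiczTerm q a b s = s ^ (-q - 1) * (a * s ^ (2 * q) - b) := by
  have : s ^ (q - 1) = s ^ (-q - 1) * s ^ (2 * q) := by rw [← rpow_add hs]; ring_nf
  rw [lichnerowiczTerm, this]
  ring

lemma lichnerowiczTerm_pos_iff (hq : 0 < q) (ha : 0 < a) (hb : 0 ≤ b) (hs : 0 < s) :
    0 < lichnerowiczTerm q a b s ↔ lichnerowiczZero q a b < s := by
  rw [lichnerowiczTerm_eq_rpow_mul hs, mul_pos_iff_of_pos_left (rpow_pos_of_pos hs _), sub_pos,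
    lichnerowiczZero, one_div, rpow_inv_lt_iff_of_pos (div_nonneg hb ha.le) hs.le (by linarith),
    div_lt_iff₀' ha]

lemma lichnerowiczTerm_neg_iff (hq : 0 < q) (ha : 0 < a) (hb : 0 ≤ b) (hs : 0 < s) :
    lichnerowiczTerm q a b s < 0 ↔ s < lichnerowiczZero q a b := by
  rw [lichnerowiczTerm_eq_rpow_mul hs, ← neg_pos, ← mul_neg,
    mul_pos_iff_of_pos_left (rpow_pos_of_pos hs _), neg_pos, sub_neg,
    lichnerowiczZero, one_div, lt_rpow_inv_iff_of_pos hs.le (div_nonneg hb ha.le) (by linarith),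
    lt_div_iff₀' ha]

lemma lichnerowiczZero_pos (ha : 0 < a) (hb : 0 < b) : 0 < lichnerowiczZero q a b :=
  rpow_pos_of_pos (div_pos hb ha) _

lemma lichnerowiczTerm_lichnerowiczZero (hq : 0 < q) (ha : 0 < a) (hb : 0 < b) :
    lichnerowiczTerm q a b (lichnerowiczZero q a b) = 0 := by
  have hz := lichnerowiczZero_pos (q := q) ha hb
  refine le_antisymm (not_lt.1 fun h => ?_) (not_lt.1 fun h => ?_)
  · exact lt_irrefl _ ((lichnerowiczTerm_pos_iff hq ha hb.le hz).1 h)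
  · exact lt_irrefl _ ((lichnerowiczTerm_neg_iff hq ha hb.le hz).1 h)

lemma strictMonoOn_lichnerowiczTerm (hq : 1 < q) (ha : 0 < a) (hb : 0 ≤ b) :
    StrictMonoOn (lichnerowiczTerm q a b) (Ioi 0) := by
  intro u hu v _ huv
  have h₁ := mul_lt_mul_of_pos_left (rpow_lt_rpow (le_of_lt hu) huv (by linarith : 0 < q - 1)) ha
  have h₂ := mul_le_mul_of_nonneg_left
    (rpow_lt_rpow_of_neg (show 0 < u from hu) huv (by linarith : -q - 1 < 0)).le hb
  simp only [lichnerowiczTerm]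
  linarith

lemma continuousOn_lichnerowiczTerm : ContinuousOn (lichnerowiczTerm q a b) (Ioi 0) := by
  have hrpow (p : ℝ) : ContinuousOn (fun s : ℝ => s ^ p) (Ioi 0) :=
    continuousOn_id.rpow_const fun s hs => Or.inl (ne_of_gt hs)
  exact (continuousOn_const.mul (hrpow _)).sub (continuousOn_const.mul (hrpow _))

lemma exists_abs_lichnerowiczTerm_le {m : ℝ} (hm : 0 < m) (M : ℝ) :
    ∃ K, ∀ s ∈ Icc m M, |lichnerowiczTerm q a b s| ≤ K :=
  isCompact_Icc.exists_bound_of_continuousOn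
    (continuousOn_lichnerowiczTerm.mono fun _ hs => lt_of_lt_of_le hm hs.1)

end LichnerowiczTerm

lemma StrictMonoOn.exists_abs_sub_lt {f : ℝ → ℝ} {z ε : ℝ} (hf : StrictMonoOn f (Ioi 0))
    (hz : 0 < z) (hfz : f z = 0) (hε : 0 < ε) :
    ∃ ρ > 0, ∀ u > 0, |f u| < ρ → |u - z| < ε := by
  set ε' := min ε (z / 2)
  have hε' : 0 < ε' := lt_min hε (half_pos hz)
  have hzε : 0 < z - ε' := by linarith [min_le_right ε (z / 2)]
  have hup : 0 < f (z + ε') := hfz ▸ hf hz (show 0 < z + ε' by linarith) (by linarith)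
  have hlo : f (z - ε') < 0 := hfz ▸ hf hzε hz (by linarith)
  set ρ := min (f (z + ε')) (-f (z - ε'))
  refine ⟨ρ, lt_min hup (neg_pos.2 hlo), fun u hu hfu => ?_⟩
  obtain ⟨hfu₁, hfu₂⟩ := abs_lt.1 hfu
  have h₁ : u < z + ε' :=
    (hf.lt_iff_lt hu (show 0 < z + ε' by linarith)).1 (hfu₂.trans_le (min_le_left _ _))
  have h₂ : z - ε' < u :=
    (hf.lt_iff_lt hzε hu).1 (by linarith [min_le_right (f (z + ε')) (-f (z - ε'))])
  rw [abs_sub_lt_iff]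
  constructor <;> linarith [min_le_left ε (z / 2)]

lemma Function.Periodic.exists_isMaxOn {f : ℝ → ℝ} {c : ℝ} (hp : Periodic f c) (hc : c ≠ 0)
    (hf : Continuous f) : ∃ x₀, IsMaxOn f univ x₀ := by
  obtain ⟨_, ⟨x₀, rfl⟩, hx₀⟩ :=
    (hp.compact_of_continuous hc hf).exists_isGreatest (range_nonempty f)
  exact ⟨x₀, fun y _ => hx₀ ⟨y, rfl⟩⟩

lemma Function.Periodic.exists_isMinOn {f : ℝ → ℝ} {c : ℝ} (hp : Periodic f c) (hc : c ≠ 0)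
    (hf : Continuous f) : ∃ x₀, IsMinOn f univ x₀ := by
  obtain ⟨_, ⟨x₀, rfl⟩, hx₀⟩ :=
    (hp.compact_of_continuous hc hf).exists_isLeast (range_nonempty f)
  exact ⟨x₀, fun y _ => hx₀ ⟨y, rfl⟩⟩

lemma Function.Periodic.deriv {f : ℝ → ℝ} {c : ℝ} (hp : Periodic f c) : Periodic (deriv f) c :=
  fun x => by rw [← deriv_comp_add_const, show (fun y => f (y + c)) = f from funext hp]

lemma lt_of_deriv_eq_zero_of_deriv_deriv_pos {f : ℝ → ℝ} (hf : ContDiff ℝ 1 f) {a b : ℝ}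
    (hab : a < b) (ha : deriv f a = 0) (h : ∀ x ∈ Ioo a b, 0 < deriv (deriv f) x) : f a < f b := by
  have hf' : StrictMonoOn (deriv f) (Icc a b) :=
    strictMonoOn_of_deriv_pos (convex_Icc a b) (hf.continuous_deriv le_rfl).continuousOn
      (by rwa [interior_Icc])
  refine strictMonoOn_of_deriv_pos (convex_Icc a b) hf.continuous.continuousOn (fun x hx => ?_)
    (left_mem_Icc.2 hab.le) (right_mem_Icc.2 hab.le) hab
  rw [interior_Icc] at hx
  exact ha ▸ hf' (left_mem_Icc.2 hab.le) (Ioo_subset_Icc_self hx) hx.1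

lemma le_of_isMaxOn_of_deriv_deriv_pos {f : ℝ → ℝ} {x₀ r M : ℝ} (hmax : IsMaxOn f univ x₀)
    (hf : ContDiff ℝ 1 f) (hr : 0 < r)
    (h : ∀ x ∈ Ioo x₀ (x₀ + r), M < f x → 0 < deriv (deriv f) x) : f x₀ ≤ M := by
  by_contra! hM
  obtain ⟨ε, hε, hball⟩ :=
    Metric.eventually_nhds_iff.1 (hf.continuous.continuousAt.eventually (lt_mem_nhds hM))
  have hr' : 0 < min r ε := lt_min hr hε
  refine (hmax (mem_univ (x₀ + min r ε))).not_gt (lt_of_deriv_eq_zero_of_deriv_deriv_pos hf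
    (by linarith) (hmax.isLocalMax univ_mem).deriv_eq_zero fun x hx => h x ⟨hx.1, ?_⟩ (hball ?_))
  · linarith [hx.2, min_le_left r ε]
  · rw [Real.dist_eq, abs_of_pos (by linarith [hx.1])]
    linarith [hx.2, min_le_right r ε]

lemma le_of_isMinOn_of_deriv_deriv_neg {f : ℝ → ℝ} {x₀ r m : ℝ} (hmin : IsMinOn f univ x₀)
    (hf : ContDiff ℝ 1 f) (hr : 0 < r)
    (h : ∀ x ∈ Ioo x₀ (x₀ + r), f x < m → deriv (deriv f) x < 0) : m ≤ f x₀ := by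
  have := le_of_isMaxOn_of_deriv_deriv_pos (M := -m) hmin.neg hf.neg hr fun x hx hmx => by
    simp only [deriv.fun_neg', deriv.fun_neg]
    exact neg_pos.2 (h x hx (by simpa using hmx))
  simpa using this

lemma abs_sub_le_of_abs_deriv_le {f : ℝ → ℝ} {a b C : ℝ} (hf : ContinuousOn f (Icc a b))
    (hd : ∀ x ∈ Ioo a b, DifferentiableAt ℝ f x ∧ |deriv f x| ≤ C) {x y : ℝ}
    (hx : x ∈ Icc a b) (hy : y ∈ Icc a b) : |f y - f x| ≤ C * |y - x| := by
  wlog hxy : x ≤ y generalizing x y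
  · rw [abs_sub_comm, abs_sub_comm y]
    exact this hy hx (le_of_not_ge hxy)
  have hdiff : DifferentiableOn ℝ f (interior (Icc a b)) := by
    rw [interior_Icc]
    exact fun z hz => (hd z hz).1.differentiableWithinAt
  have hbound : ∀ z ∈ interior (Icc a b), -C ≤ deriv f z ∧ deriv f z ≤ C := by
    rw [interior_Icc]
    exact fun z hz => abs_le.1 (hd z hz).2
  have hupper := (convex_Icc a b).image_sub_le_mul_sub_of_deriv_le hf hdiff
    (fun z hz => (hbound z hz).2) x hx y hy hxy
  have hlower := (convex_Icc a b).mul_sub_le_image_sub_of_le_deriv hf hdiff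
    (fun z hz => (hbound z hz).1) x hx y hy hxy
  rw [abs_of_nonneg (sub_nonneg.2 hxy), abs_sub_le_iff]
  constructor <;> linarith

lemma exists_deriv_add_deriv_eq_zero {g : ℝ → ℝ} {p : ℝ} (hp : 0 < p) (hg : Continuous g)
    (hper : g (2 * p) = g 0) (hd₁ : ∀ x ∈ Ioo 0 p, DifferentiableAt ℝ g x)
    (hd₂ : ∀ x ∈ Ioo p (2 * p), DifferentiableAt ℝ g x) :
    ∃ ξ₁ ∈ Ioo 0 p, ∃ ξ₂ ∈ Ioo p (2 * p), deriv g ξ₁ + deriv g ξ₂ = 0 := by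
  obtain ⟨ξ₁, hξ₁, h₁⟩ := exists_deriv_eq_slope g hp hg.continuousOn
    fun x hx => (hd₁ x hx).differentiableWithinAt
  obtain ⟨ξ₂, hξ₂, h₂⟩ := exists_deriv_eq_slope g (by linarith : p < 2 * p) hg.continuousOn
    fun x hx => (hd₂ x hx).differentiableWithinAt
  refine ⟨ξ₁, hξ₁, ξ₂, hξ₂, ?_⟩
  rw [h₁, h₂, hper]
  ring

section PiecewiseTwiceDifferentiable

variable {ψ : ℝ → ℝ} {K : ℝ}

lemma abs_deriv_sub_deriv_pi_le (hψ : ContDiff ℝ 1 ψ)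
    (hK : ∀ x, (∀ k : ℤ, x ≠ k * π) → DifferentiableAt ℝ (deriv ψ) x ∧ |deriv (deriv ψ) x| ≤ K)
    {x : ℝ} (hx : x ∈ Icc 0 (2 * π)) : |deriv ψ x - deriv ψ π| ≤ K * π := by
  have hcont := hψ.continuous_deriv le_rfl
  have hK₀ : 0 ≤ K := (abs_nonneg _).trans
    (hK (π / 2) (forall_mem_Ioo_zero_pi_ne_int_mul_pi _ ⟨by positivity, by linarith [pi_pos]⟩)).2
  have hxπ : |x - π| ≤ π := abs_le.2 ⟨by linarith [hx.1], by linarith [hx.2]⟩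
  refine le_trans ?_ (mul_le_mul_of_nonneg_left hxπ hK₀)
  rcases le_total x π with h | h
  · exact abs_sub_le_of_abs_deriv_le hcont.continuousOn
      (fun z hz => hK z (forall_mem_Ioo_zero_pi_ne_int_mul_pi z hz)) ⟨pi_pos.le, le_rfl⟩ ⟨hx.1, h⟩
  · exact abs_sub_le_of_abs_deriv_le hcont.continuousOn
      (fun z hz => hK z (forall_mem_Ioo_pi_two_pi_ne_int_mul_pi z hz))
      ⟨le_rfl, by linarith [pi_pos]⟩ ⟨h, hx.2⟩

lemma abs_deriv_le_of_periodic (hper : Periodic ψ (2 * π)) (hψ : ContDiff ℝ 1 ψ)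
    (hK : ∀ x, (∀ k : ℤ, x ≠ k * π) → DifferentiableAt ℝ (deriv ψ) x ∧ |deriv (deriv ψ) x| ≤ K)
    (x : ℝ) : |deriv ψ x| ≤ 2 * π * K := by
  obtain ⟨z, hz, hz₀⟩ := exists_deriv_eq_zero two_pi_pos hψ.continuous.continuousOn
    (by simpa using (hper 0).symm)
  obtain ⟨y, hy, hxy⟩ := hper.deriv.exists_mem_Ico₀ two_pi_pos x
  calc |deriv ψ x| = |(deriv ψ y - deriv ψ π) - (deriv ψ z - deriv ψ π)| := by
        rw [hxy, hz₀]; ring_nf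
    _ ≤ |deriv ψ y - deriv ψ π| + |deriv ψ z - deriv ψ π| := abs_sub _ _
    _ ≤ K * π + K * π := add_le_add (abs_deriv_sub_deriv_pi_le hψ hK (Ico_subset_Icc_self hy))
        (abs_deriv_sub_deriv_pi_le hψ hK (Ioo_subset_Icc_self hz))
    _ = 2 * π * K := by ring

lemma abs_sub_le_of_periodic (hper : Periodic ψ (2 * π)) (hψ : ContDiff ℝ 1 ψ)
    (hK : ∀ x, (∀ k : ℤ, x ≠ k * π) → DifferentiableAt ℝ (deriv ψ) x ∧ |deriv (deriv ψ) x| ≤ K)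
    (x y : ℝ) : |ψ x - ψ y| ≤ 4 * π ^ 2 * K := by
  obtain ⟨y', hy', hyy'⟩ := hper.exists_mem_Ico two_pi_pos y x
  have hlip := convex_univ.norm_image_sub_le_of_norm_deriv_le
    (fun z _ => (hψ.differentiable one_ne_zero).differentiableAt)
    (fun z _ => (abs_deriv_le_of_periodic hper hψ hK z)) (mem_univ y') (mem_univ x)
  have hK₀ : 0 ≤ 2 * π * K := (abs_nonneg _).trans (abs_deriv_le_of_periodic hper hψ hK 0)
  rw [hyy']
  calc |ψ x - ψ y'| ≤ 2 * π * K * |x - y'| := hlip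
    _ ≤ 2 * π * K * (2 * π) := mul_le_mul_of_nonneg_left
        (abs_le.2 ⟨by linarith [hy'.2], by linarith [hy'.1, pi_pos]⟩) hK₀
    _ = 4 * π ^ 2 * K := by ring

end PiecewiseTwiceDifferentiable

lemma exists_lichnerowiczTerm_sign {q t γ : ℝ} (hq : 0 < q) (ht : |t| ≠ 1) (hγ : |γ| ≠ 1) :
    ∃ m M, 0 < m ∧ ∀ l : ℝ, (l = 1 ∨ l = -1) → ∀ s > 0,
      (s < m → lichnerowiczTerm q ((t + l) ^ 2) ((γ + l) ^ 2) s < 0) ∧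
      (M < s → 0 < lichnerowiczTerm q ((t + l) ^ 2) ((γ + l) ^ 2) s) := by
  have hsq : ∀ a : ℝ, |a| ≠ 1 → ∀ l : ℝ, (l = 1 ∨ l = -1) → 0 < (a + l) ^ 2 := by
    rintro a ha l (rfl | rfl) <;> refine sq_pos_of_ne_zero ?_ <;> intro h <;> apply ha
    · rw [show a = -1 by linarith, abs_neg, abs_one]
    · rw [show a = 1 by linarith, abs_one]
  set z := fun l : ℝ => lichnerowiczZero q ((t + l) ^ 2) ((γ + l) ^ 2)
  have hz : ∀ l : ℝ, (l = 1 ∨ l = -1) → min (z 1) (z (-1)) ≤ z l ∧ z l ≤ max (z 1) (z (-1)) := by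
    rintro l (rfl | rfl)
    exacts [⟨min_le_left _ _, le_max_left _ _⟩, ⟨min_le_right _ _, le_max_right _ _⟩]
  refine ⟨min (z 1) (z (-1)), max (z 1) (z (-1)),
    lt_min (lichnerowiczZero_pos (hsq t ht 1 (.inl rfl)) (hsq γ hγ 1 (.inl rfl)))
      (lichnerowiczZero_pos (hsq t ht (-1) (.inr rfl)) (hsq γ hγ (-1) (.inr rfl))),
    fun l hl s hs => ⟨fun hsm => ?_, fun hsM => ?_⟩⟩
  · exact (lichnerowiczTerm_neg_iff hq (hsq t ht l hl) (sq_nonneg _) hs).2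
      (hsm.trans_le (hz l hl).1)
  · exact (lichnerowiczTerm_pos_iff hq (hsq t ht l hl) (sq_nonneg _) hs).2
      ((hz l hl).2.trans_lt hsM)

lemma exists_forall_abs_lichnerowiczTerm_le {q t γ m : ℝ} (hm : 0 < m) (M : ℝ) :
    ∃ K, ∀ l : ℝ, (l = 1 ∨ l = -1) → ∀ s ∈ Icc m M,
      |lichnerowiczTerm q ((t + l) ^ 2) ((γ + l) ^ 2) s| ≤ K := by
  obtain ⟨K₁, hK₁⟩ := exists_abs_lichnerowiczTerm_le (q := q) (a := (t + 1) ^ 2)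
    (b := (γ + 1) ^ 2) hm M
  obtain ⟨K₂, hK₂⟩ := exists_abs_lichnerowiczTerm_le (q := q) (a := (t + -1) ^ 2)
    (b := (γ + -1) ^ 2) hm M
  refine ⟨max K₁ K₂, ?_⟩
  rintro l (rfl | rfl) s hs
  exacts [(hK₁ s hs).trans (le_max_left _ _), (hK₂ s hs).trans (le_max_right _ _)]

lemma exists_abs_sub_lichnerowiczZero_lt {q t γ m M ε : ℝ} (hq : 1 < q) (hm : 0 < m)
    (hε : 0 < ε) : ∃ τ > 0, ∀ u ∈ Icc m M, ∀ v ∈ Icc m M, |u - v| < τ →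
      lichnerowiczTerm q ((t + 1) ^ 2) ((γ + 1) ^ 2) u +
        lichnerowiczTerm q ((t - 1) ^ 2) ((γ - 1) ^ 2) v = 0 →
      |u - lichnerowiczZero q (1 + t ^ 2) (1 + γ ^ 2)| < ε := by
  set F := lichnerowiczTerm q (1 + t ^ 2) (1 + γ ^ 2)
  set g := lichnerowiczTerm q ((t - 1) ^ 2) ((γ - 1) ^ 2)
  have hsum (s : ℝ) : lichnerowiczTerm q ((t + 1) ^ 2) ((γ + 1) ^ 2) s + g s = 2 * F s := by
    simp only [g, F, lichnerowiczTerm]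
    ring
  obtain ⟨ρ, hρ, hF⟩ :=
    (strictMonoOn_lichnerowiczTerm hq (by positivity) (by positivity)).exists_abs_sub_lt
      (lichnerowiczZero_pos (a := 1 + t ^ 2) (b := 1 + γ ^ 2) (by positivity) (by positivity))
      (lichnerowiczTerm_lichnerowiczZero (by linarith) (by positivity) (by positivity)) hε
  have hIcc : Icc m M ⊆ Ioi 0 := fun s hs => lt_of_lt_of_le hm hs.1
  obtain ⟨τ, hτ, hg⟩ := Metric.uniformContinuousOn_iff.1
    (isCompact_Icc.uniformContinuousOn_of_continuous (f := g)
      (continuousOn_lichnerowiczTerm.mono hIcc))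
    (2 * ρ) (by positivity)
  refine ⟨τ, hτ, fun u hu v hv huv hbal => hF u (hIcc hu) ?_⟩
  have hgu := hg u hu v hv (by rwa [Real.dist_eq])
  rw [Real.dist_eq] at hgu
  have h2F : 2 * F u = g u - g v := by linarith [hsum u]
  rw [abs_lt] at hgu ⊢
  constructor <;> linarith

lemma exists_pos_forall_mul_rpow_lt {e : ℝ} (he : 0 < e) (C : ℝ) {η : ℝ} (hη : 0 < η) :
    ∃ δ > 0, ∀ d, 0 < d → d < δ → C * d ^ e < η := by
  have hlim : Tendsto (fun d : ℝ => C * d ^ e) (𝓝 0) (𝓝 0) := by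
    have hcont : Continuous fun d : ℝ => C * d ^ e :=
      continuous_const.mul (continuous_rpow_const he.le)
    simpa [zero_rpow he.ne'] using hcont.tendsto 0
  obtain ⟨δ, hδ, h⟩ := Metric.eventually_nhds_iff.1 (hlim.eventually (gt_mem_nhds hη))
  exact ⟨δ, hδ, fun d hd hdδ => h (by rwa [Real.dist_eq, sub_zero, abs_of_pos hd])⟩

namespace IsModelSolution

variable {n : ℕ} {t γ d : ℝ} {ψ : ℝ → ℝ}

lemma deriv_deriv_eq (hψ : IsModelSolution n t γ 0 0 d ψ) (hn : 3 ≤ n) (hd : 0 < d) {x : ℝ}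
    (hx : ∀ k : ℤ, x ≠ k * π) :
    deriv (deriv ψ) x = d ^ (qex n - 2) / (2 * qex n) *
      lichnerowiczTerm (qex n) ((t + lam x) ^ 2) ((γ + lam x) ^ 2) (ψ x) := by
  have heq := (hψ.2.2.2 x hx).2
  have hq := two_lt_qex hn
  rw [rpow_neg hd.le] at heq
  have h : kap n * (2 * qex n * deriv (deriv ψ) x - d ^ (qex n - 2) *
      lichnerowiczTerm (qex n) ((t + lam x) ^ 2) ((γ + lam x) ^ 2) (ψ x)) = 0 := by
    unfold lichnerowiczTerm
    field_simp at heq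
    linear_combination -heq
  rw [mul_eq_zero, or_iff_right (kap_pos (by omega)).ne', sub_eq_zero] at h
  field_simp
  linear_combination h

lemma le_of_forall_lichnerowiczTerm_pos (hψ : IsModelSolution n t γ 0 0 d ψ) (hn : 3 ≤ n)
    (hd : 0 < d) {M : ℝ} (hM : ∀ l : ℝ, (l = 1 ∨ l = -1) → ∀ s > 0, M < s →
      0 < lichnerowiczTerm (qex n) ((t + l) ^ 2) ((γ + l) ^ 2) s) (x : ℝ) : ψ x ≤ M := by
  obtain ⟨hper, hpos, hC, -⟩ := id hψ
  obtain ⟨x₀, hx₀⟩ := Periodic.exists_isMaxOn hper two_pi_pos.ne' hC.continuous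
  obtain ⟨r, hr, hfree⟩ := exists_pos_forall_mem_Ioo_ne_int_mul_pi x₀
  refine (hx₀ (mem_univ x)).trans (le_of_isMaxOn_of_deriv_deriv_pos hx₀ hC hr fun y hy hMy => ?_)
  rw [hψ.deriv_deriv_eq hn hd (hfree y hy)]
  exact mul_pos (rpow_qex_sub_two_div_pos hn hd) (hM _ (lam_eq_one_or_eq_neg_one y) _ (hpos y) hMy)

lemma ge_of_forall_lichnerowiczTerm_neg (hψ : IsModelSolution n t γ 0 0 d ψ) (hn : 3 ≤ n)
    (hd : 0 < d) {m : ℝ} (hm : ∀ l : ℝ, (l = 1 ∨ l = -1) → ∀ s > 0, s < m →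
      lichnerowiczTerm (qex n) ((t + l) ^ 2) ((γ + l) ^ 2) s < 0) (x : ℝ) : m ≤ ψ x := by
  obtain ⟨hper, hpos, hC, -⟩ := id hψ
  obtain ⟨x₀, hx₀⟩ := Periodic.exists_isMinOn hper two_pi_pos.ne' hC.continuous
  obtain ⟨r, hr, hfree⟩ := exists_pos_forall_mem_Ioo_ne_int_mul_pi x₀
  refine (le_of_isMinOn_of_deriv_deriv_neg hx₀ hC hr fun y hy hmy => ?_).trans (hx₀ (mem_univ x))
  rw [hψ.deriv_deriv_eq hn hd (hfree y hy)]
  exact mul_neg_of_pos_of_neg (rpow_qex_sub_two_div_pos hn hd)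
    (hm _ (lam_eq_one_or_eq_neg_one y) _ (hpos y) hmy)

lemma abs_sub_le (hψ : IsModelSolution n t γ 0 0 d ψ) (hn : 3 ≤ n) (hd : 0 < d) {m M K : ℝ}
    (hmem : ∀ x, ψ x ∈ Icc m M) (hK : ∀ l : ℝ, (l = 1 ∨ l = -1) → ∀ s ∈ Icc m M,
      |lichnerowiczTerm (qex n) ((t + l) ^ 2) ((γ + l) ^ 2) s| ≤ K) (x y : ℝ) :
    |ψ x - ψ y| ≤ 4 * π ^ 2 * K / (2 * qex n) * d ^ (qex n - 2) := by
  have hc := rpow_qex_sub_two_div_pos hn hd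
  refine (abs_sub_le_of_periodic (K := d ^ (qex n - 2) / (2 * qex n) * K) hψ.1 hψ.2.2.1
    (fun z hz => ⟨(hψ.2.2.2 z hz).1, ?_⟩) x y).trans_eq (by ring)
  rw [hψ.deriv_deriv_eq hn hd hz, abs_mul, abs_of_pos hc]
  exact mul_le_mul_of_nonneg_left (hK _ (lam_eq_one_or_eq_neg_one z) _ (hmem z)) hc.le

lemma exists_lichnerowiczTerm_add_eq_zero (hψ : IsModelSolution n t γ 0 0 d ψ) (hn : 3 ≤ n)
    (hd : 0 < d) : ∃ ξ₁ ξ₂, lichnerowiczTerm (qex n) ((t + 1) ^ 2) ((γ + 1) ^ 2) (ψ ξ₁) +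
      lichnerowiczTerm (qex n) ((t - 1) ^ 2) ((γ - 1) ^ 2) (ψ ξ₂) = 0 := by
  obtain ⟨ξ₁, hξ₁, ξ₂, hξ₂, hsum⟩ := exists_deriv_add_deriv_eq_zero pi_pos
    (hψ.2.2.1.continuous_deriv le_rfl) (by simpa using Periodic.deriv hψ.1 0)
    (fun x hx => (hψ.2.2.2 x (forall_mem_Ioo_zero_pi_ne_int_mul_pi x hx)).1)
    (fun x hx => (hψ.2.2.2 x (forall_mem_Ioo_pi_two_pi_ne_int_mul_pi x hx)).1)
  rw [hψ.deriv_deriv_eq hn hd (forall_mem_Ioo_zero_pi_ne_int_mul_pi ξ₁ hξ₁),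
    hψ.deriv_deriv_eq hn hd (forall_mem_Ioo_pi_two_pi_ne_int_mul_pi ξ₂ hξ₂),
    lam_of_mem_Ioo_zero_pi hξ₁, lam_of_mem_Ioo_pi_two_pi hξ₂, ← mul_add,
    mul_eq_zero, or_iff_right (rpow_qex_sub_two_div_pos hn hd).ne'] at hsum
  exact ⟨ξ₁, ξ₂, by simpa only [sub_eq_add_neg] using hsum⟩

end IsModelSolution

lemma exists_pos_forall_isModelSolution_mem_Icc {n : ℕ} {t γ : ℝ} (hn : 3 ≤ n) (ht : |t| ≠ 1)
    (hγ : |γ| ≠ 1) : ∃ m M, 0 < m ∧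
      ∀ d > 0, ∀ ψ, IsModelSolution n t γ 0 0 d ψ → ∀ x, ψ x ∈ Icc m M := by
  obtain ⟨m, M, hm, hsign⟩ := exists_lichnerowiczTerm_sign (by linarith [two_lt_qex hn]) ht hγ
  exact ⟨m, M, hm, fun d hd ψ hψ x =>
    ⟨hψ.ge_of_forall_lichnerowiczTerm_neg hn hd (fun l hl s hs => (hsign l hl s hs).1) x,
      hψ.le_of_forall_lichnerowiczTerm_pos hn hd (fun l hl s hs => (hsign l hl s hs).2) x⟩⟩

/-- Small-d limit for vanishing transverse-traceless data (Lemma 3.20). -/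
theorem small_d_limit (n : ℕ) (hn : 3 ≤ n) (t γ : ℝ)
    (hγ : -1 < γ ∧ γ < 1) (ht : |t| ≠ 1) :
    ∀ ε : ℝ, 0 < ε → ∃ δ : ℝ, 0 < δ ∧
      ∀ d : ℝ, 0 < d → d < δ →
        ∀ ψ : ℝ → ℝ, IsModelSolution n t γ 0 0 d ψ →
          ∀ x : ℝ, |ψ x - ((1 + γ ^ 2) / (1 + t ^ 2)) ^ (1 / (2 * qex n))| < ε := by
  intro ε hε
  have hq := two_lt_qex hn
  obtain ⟨m, M, hm, hmem⟩ := exists_pos_forall_isModelSolution_mem_Icc hn ht (abs_lt.2 hγ).ne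
  obtain ⟨K, hK⟩ := exists_forall_abs_lichnerowiczTerm_le (q := qex n) (t := t) (γ := γ) hm M
  obtain ⟨τ, hτ, hclose⟩ := exists_abs_sub_lichnerowiczZero_lt (q := qex n) (t := t) (γ := γ)
    (M := M) (by linarith) hm (half_pos hε)
  obtain ⟨δ, hδ, hsmall⟩ := exists_pos_forall_mul_rpow_lt (by linarith : 0 < qex n - 2)
    (4 * π ^ 2 * K / (2 * qex n)) (lt_min hτ (half_pos hε))
  refine ⟨δ, hδ, fun d hd hdδ ψ hψ x => ?_⟩
  have hosc (x y : ℝ) : |ψ x - ψ y| < min τ (ε / 2) :=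
    (hψ.abs_sub_le hn hd (hmem d hd ψ hψ) hK x y).trans_lt (hsmall d hd hdδ)
  obtain ⟨ξ₁, ξ₂, hbal⟩ := hψ.exists_lichnerowiczTerm_add_eq_zero hn hd
  have hξ₁ := hclose _ (hmem d hd ψ hψ ξ₁) _ (hmem d hd ψ hψ ξ₂)
    ((hosc ξ₁ ξ₂).trans_le (min_le_left _ _)) hbal
  calc |ψ x - _| ≤ |ψ x - ψ ξ₁| + |ψ ξ₁ - lichnerowiczZero (qex n) (1 + t ^ 2) (1 + γ ^ 2)| :=
        abs_sub_le _ _ _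
    _ < ε / 2 + ε / 2 := add_lt_add ((hosc x ξ₁).trans_le (min_le_right _ _)) hξ₁
    _ = ε := add_halves ε
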